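/- arXiv:1312.6394 — 3 statements merged into one kernel-verified Lean document; each statement's English description precedes it below -/
import Mathlib

section
/- Let $S \subset \mathbb{N}^d$ be a smoothness (a finite set containing $0$ and closed under coordinatewise domination: if $\alpha \in S$ and $\beta(j) \le \alpha(j)$ for all $j$ then $\beta \in S$). Suppose $S$ has Property (O): there exist $\alpha, \beta \in S$ with $|\alpha| \not\equiv |\beta| \pmod 2$ and a vector $c \in \mathbb{R}^d$ with all coordinates positive such that $\langle \alpha, c \rangle = \langle \beta, c \rangle = 1$ and $\langle \gamma, c \rangle \le 1$ for all $\gamma \in S$. Then there exists a sequence $(n_k) \subset \mathbb{N}^d$ with $\lim_k \min_{1\le j \le d} n_k(j) = \infty$ and $\inf_k \min\{|\sigma_\alpha(n_k)|, |\sigma_\beta(n_k)|\} \cdot Q_S(n_k)^{-1/2} > 0$. -/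
/-!
Take `n(j) ≈ N^{c(j)}` with `N → ∞`. Then `|σ_γ(n)| ≈ N^{⟨γ, c⟩}`, which is `≈ N` for
`γ = α, β` and `≲ N` for every `γ ∈ S`; hence `Q_S(n) ≲ N²` while `|σ_α(n)|, |σ_β(n)| ≳ N`.
-/

open Finset

/-- The symbol `σ_γ(n) = ∏_j (i n(j))^{γ(j)}` if all coordinates of `n` are
nonzero, and `0` otherwise. -/
noncomputable def sigmaSym (d : ℕ) (γ : Fin d → ℕ) (n : Fin d → ℤ) : ℂ :=
  if ∀ j, n j ≠ 0 then ∏ j : Fin d, (Complex.I * (n j : ℂ)) ^ γ j else 0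

/-- The fundamental polynomial `Q_S(n) = ∑_{γ ∈ S} |σ_γ(n)|²`. -/
noncomputable def QS (d : ℕ) (S : Finset (Fin d → ℕ)) (n : Fin d → ℤ) : ℝ :=
  ∑ γ ∈ S, ‖sigmaSym d γ n‖ ^ 2

open Filter

section ProdPow

variable {ι : Type*} [Fintype ι]

lemma prod_rpow_pow_eq_rpow_sum {N : ℝ} (hN : 0 < N) (c : ι → ℝ) (γ : ι → ℕ) :
    ∏ j, (N ^ c j) ^ γ j = N ^ ∑ j, (γ j : ℝ) * c j := by
  rw [Real.rpow_sum_of_pos hN]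
  refine prod_congr rfl fun j _ => ?_
  rw [← Real.rpow_natCast, ← Real.rpow_mul hN.le, mul_comm]

lemma rpow_sum_le_prod_pow {N : ℝ} (hN : 0 < N) {c m : ι → ℝ} (hm : ∀ j, N ^ c j ≤ m j)
    (γ : ι → ℕ) : N ^ ∑ j, (γ j : ℝ) * c j ≤ ∏ j, m j ^ γ j := by
  rw [← prod_rpow_pow_eq_rpow_sum hN]
  gcongr with j
  exact hm j

lemma prod_pow_le_two_pow_mul {N : ℝ} (hN : 1 ≤ N) {c m : ι → ℝ} (hm₀ : ∀ j, 0 ≤ m j)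
    (hm : ∀ j, m j ≤ 2 * N ^ c j) {γ : ι → ℕ} (hγ : ∑ j, (γ j : ℝ) * c j ≤ 1) :
    ∏ j, m j ^ γ j ≤ 2 ^ (∑ j, γ j) * N := by
  have hN₀ : 0 < N := one_pos.trans_le hN
  calc ∏ j, m j ^ γ j ≤ ∏ j, (2 * N ^ c j) ^ γ j :=
        prod_le_prod (fun j _ => pow_nonneg (hm₀ j) _) fun j _ => pow_le_pow_left₀ (hm₀ j) (hm j) _
    _ = 2 ^ (∑ j, γ j) * N ^ ∑ j, (γ j : ℝ) * c j := by
        simp_rw [mul_pow]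
        rw [prod_mul_distrib, prod_pow_eq_pow_sum, prod_rpow_pow_eq_rpow_sum hN₀]
    _ ≤ 2 ^ (∑ j, γ j) * N := by
        gcongr
        exact (Real.rpow_le_rpow_of_exponent_le hN hγ).trans_eq (Real.rpow_one N)

end ProdPow

lemma norm_sigmaSym_natCast {d : ℕ} (γ : Fin d → ℕ) {m : Fin d → ℕ} (hm : ∀ j, m j ≠ 0) :
    ‖sigmaSym d γ fun j => (m j : ℤ)‖ = ∏ j, (m j : ℝ) ^ γ j := by
  rw [sigmaSym, if_pos (by exact_mod_cast hm), norm_prod]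
  simp

section Scaling

variable {d : ℕ} {c : Fin d → ℝ} {N : ℝ} {m : Fin d → ℕ}

lemma ne_zero_of_rpow_le (hN : 1 ≤ N) (hlow : ∀ j, N ^ c j ≤ m j) (j : Fin d) : m j ≠ 0 := by
  have := (Real.rpow_pos_of_pos (one_pos.trans_le hN) (c j)).trans_le (hlow j)
  exact_mod_cast this.ne'

lemma le_norm_sigmaSym (hN : 1 ≤ N) (hlow : ∀ j, N ^ c j ≤ m j) {γ : Fin d → ℕ}
    (hγ : ∑ j, (γ j : ℝ) * c j = 1) : N ≤ ‖sigmaSym d γ fun j => (m j : ℤ)‖ := by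
  rw [norm_sigmaSym_natCast γ (ne_zero_of_rpow_le hN hlow)]
  simpa [hγ] using rpow_sum_le_prod_pow (one_pos.trans_le hN) hlow γ

lemma QS_le_mul_sq (hN : 1 ≤ N) (hlow : ∀ j, N ^ c j ≤ m j) (hupp : ∀ j, (m j : ℝ) ≤ 2 * N ^ c j)
    {S : Finset (Fin d → ℕ)} (hS : ∀ γ ∈ S, ∑ j, (γ j : ℝ) * c j ≤ 1) :
    QS d S (fun j => (m j : ℤ)) ≤ (∑ γ ∈ S, (4 : ℝ) ^ ∑ j, γ j) * N ^ 2 := by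
  rw [QS, sum_mul]
  refine sum_le_sum fun γ hγ => ?_
  rw [norm_sigmaSym_natCast γ (ne_zero_of_rpow_le hN hlow),
    show (4 : ℝ) ^ (∑ j, γ j) * N ^ 2 = (2 ^ (∑ j, γ j) * N) ^ 2 by
      rw [mul_pow, ← pow_mul, mul_comm _ 2, pow_mul]; norm_num]
  gcongr
  exact prod_pow_le_two_pow_mul hN (fun j => (m j).cast_nonneg) hupp (hS γ hγ)

lemma inv_sqrt_le_min_norm_sigmaSym_div_sqrt_QS (hN : 1 ≤ N) (hlow : ∀ j, N ^ c j ≤ m j)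
    (hupp : ∀ j, (m j : ℝ) ≤ 2 * N ^ c j) {S : Finset (Fin d → ℕ)}
    (hS : ∀ γ ∈ S, ∑ j, (γ j : ℝ) * c j ≤ 1) {α β : Fin d → ℕ} (hα : α ∈ S)
    (hαc : ∑ j, (α j : ℝ) * c j = 1) (hβc : ∑ j, (β j : ℝ) * c j = 1) :
    1 / √(∑ γ ∈ S, (4 : ℝ) ^ ∑ j, γ j) ≤
      min ‖sigmaSym d α fun j => (m j : ℤ)‖ ‖sigmaSym d β fun j => (m j : ℤ)‖ /
        √(QS d S fun j => (m j : ℤ)) := by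
  set C := ∑ γ ∈ S, (4 : ℝ) ^ ∑ j, γ j
  have hN₀ : 0 < N := one_pos.trans_le hN
  have hQ : 0 < QS d S fun j => (m j : ℤ) := by
    have hσα := le_norm_sigmaSym hN hlow hαc
    calc 0 < ‖sigmaSym d α fun j => (m j : ℤ)‖ ^ 2 := pow_pos (hN₀.trans_le hσα) 2
      _ ≤ _ := single_le_sum (f := fun γ => ‖sigmaSym d γ fun j => (m j : ℤ)‖ ^ 2)
          (fun _ _ => by positivity) hα
  calc 1 / √C = N / √(C * N ^ 2) := by
        rw [Real.sqrt_mul' C (sq_nonneg N), Real.sqrt_sq hN₀.le, div_mul_cancel_right₀ hN₀.ne',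
          one_div]
    _ ≤ N / √(QS d S fun j => (m j : ℤ)) :=
        div_le_div_of_nonneg_left hN₀.le (Real.sqrt_pos.2 hQ)
          (Real.sqrt_le_sqrt (QS_le_mul_sq hN hlow hupp hS))
    _ ≤ _ := by
        gcongr
        exact le_min (le_norm_sigmaSym hN hlow hαc) (le_norm_sigmaSym hN hlow hβc)

end Scaling

lemma tendsto_natCeil_rpow {c : ℝ} (hc : 0 < c) :
    Tendsto (fun k : ℕ => ⌈((k : ℝ) + 1) ^ c⌉₊) atTop atTop :=
  tendsto_nat_ceil_atTop.comp <| (tendsto_rpow_atTop hc).comp <|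
    tendsto_atTop_add_const_right _ 1 tendsto_natCast_atTop_atTop

theorem stmt_9_general (d : ℕ) (S : Finset (Fin d → ℕ))
    (α β : Fin d → ℕ) (hα : α ∈ S)
    (c : Fin d → ℝ) (hc : ∀ j, 0 < c j)
    (hαc : ∑ j : Fin d, (α j : ℝ) * c j = 1)
    (hβc : ∑ j : Fin d, (β j : ℝ) * c j = 1)
    (hγc : ∀ γ ∈ S, ∑ j : Fin d, (γ j : ℝ) * c j ≤ 1) :
    ∃ n : ℕ → Fin d → ℕ,
      (∀ M : ℕ, ∃ K : ℕ, ∀ k ≥ K, ∀ j : Fin d, M ≤ n k j) ∧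
      ∃ ρ > (0 : ℝ), ∀ k : ℕ,
        ρ ≤ min (‖sigmaSym d α fun j => (n k j : ℤ)‖)
              (‖sigmaSym d β fun j => (n k j : ℤ)‖) /
            Real.sqrt (QS d S fun j => (n k j : ℤ)) := by
  refine ⟨fun k j => ⌈((k : ℝ) + 1) ^ c j⌉₊, fun M => ?_, ?_⟩
  · exact eventually_atTop.mp <| eventually_all.2 fun j =>
      (tendsto_natCeil_rpow (hc j)).eventually_ge_atTop M
  refine ⟨1 / √(∑ γ ∈ S, (4 : ℝ) ^ ∑ j, γ j), ?_, fun k => ?_⟩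
  · exact one_div_pos.2 <| Real.sqrt_pos.2 <| sum_pos (fun _ _ => by positivity) ⟨α, hα⟩
  have hN : (1 : ℝ) ≤ k + 1 := le_add_of_nonneg_left k.cast_nonneg
  have hpow (j : Fin d) : 1 ≤ ((k : ℝ) + 1) ^ c j := Real.one_le_rpow hN (hc j).le
  exact inv_sqrt_le_min_norm_sigmaSym_div_sqrt_QS hN (fun j => Nat.le_ceil _)
    (fun j => Nat.ceil_le_two_mul (by linarith [hpow j])) hγc hα hαc hβc

theorem stmt_9 (d : ℕ) (S : Finset (Fin d → ℕ)) (h0 : (0 : Fin d → ℕ) ∈ S)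
    (hclosed : ∀ α ∈ S, ∀ β : Fin d → ℕ, (∀ j, β j ≤ α j) → β ∈ S)
    (α β : Fin d → ℕ) (hα : α ∈ S) (hβ : β ∈ S)
    (hpar : (∑ j : Fin d, α j) % 2 ≠ (∑ j : Fin d, β j) % 2)
    (c : Fin d → ℝ) (hc : ∀ j, 0 < c j)
    (hαc : ∑ j : Fin d, (α j : ℝ) * c j = 1)
    (hβc : ∑ j : Fin d, (β j : ℝ) * c j = 1)
    (hγc : ∀ γ ∈ S, ∑ j : Fin d, (γ j : ℝ) * c j ≤ 1) :
    ∃ n : ℕ → Fin d → ℕ,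
      (∀ M : ℕ, ∃ K : ℕ, ∀ k ≥ K, ∀ j : Fin d, M ≤ n k j) ∧
      ∃ ρ > (0 : ℝ), ∀ k : ℕ,
        ρ ≤ min (‖sigmaSym d α fun j => (n k j : ℤ)‖)
              (‖sigmaSym d β fun j => (n k j : ℤ)‖) /
            Real.sqrt (QS d S fun j => (n k j : ℤ)) :=
  stmt_9_general d S α β hα c hc hαc hβc hγc
end

section
/- Let $S \subset \mathbb{N}^d$ be a smoothness with Property (O) witnessed by $\alpha, \beta \in S$ and $c \in (0,\infty)^d$ with $\langle\alpha,c\rangle = \langle\beta,c\rangle = 1$ and $\langle\gamma,c\rangle \le 1$ for all $\gamma \in S$. Define $n_k \in \mathbb{N}^d$ by $n_k(j) = \lceil e^{k\, c(j)} \rceil$ (or any sequence with $n_k(j) \sim e^{k c(j)}$). Then $\liminf_{k\to\infty} |\sigma_\alpha(n_k)|^2 / Q_S(n_k) > 0$. -/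
open Finset

/-!
Since `n_k(j)` lies between `e^{k c(j)}` and `2 e^{k c(j)}`, each `|σ_γ(n_k)|²` lies between
`e^{2k⟨γ,c⟩}` and `4^{|γ|} e^{2k⟨γ,c⟩}`. Hence `|σ_α(n_k)|² ≥ e^{2k}` because `⟨α,c⟩ = 1`, while
`Q_S(n_k) ≤ (∑_{γ ∈ S} 4^{|γ|}) e^{2k}` because `⟨γ,c⟩ ≤ 1` on `S`, so the ratio is bounded below
by the constant `(∑_{γ ∈ S} 4^{|γ|})⁻¹` for every `k`.
-/

open Real

lemma Nat.ceil_exp_le_two_mul_exp {x : ℝ} (hx : 0 ≤ x) : (⌈exp x⌉₊ : ℝ) ≤ 2 * exp x :=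
  (Nat.ceil_lt_two_mul (by linarith [one_le_exp hx])).le

section SigmaSym

variable {d : ℕ}

lemma norm_sigmaSym_natCast_sq {n : Fin d → ℕ} (hn : ∀ j, n j ≠ 0) (γ : Fin d → ℕ) :
    ‖sigmaSym d γ fun j => (n j : ℤ)‖ ^ 2 = ∏ j, (n j : ℝ) ^ (2 * γ j) := by
  rw [sigmaSym, if_pos fun j => Int.natCast_ne_zero.mpr (hn j), norm_prod, ← prod_pow]
  refine prod_congr rfl fun j _ => ?_
  rw [norm_pow, norm_mul, Complex.norm_I, one_mul, Int.cast_natCast, Complex.norm_natCast,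
    ← pow_mul, mul_comm]

lemma norm_sigmaSym_sq_div_QS_le_one {S : Finset (Fin d → ℕ)} {α : Fin d → ℕ} (hα : α ∈ S)
    (n : Fin d → ℤ) : ‖sigmaSym d α n‖ ^ 2 / QS d S n ≤ 1 :=
  div_le_one_of_le₀ (single_le_sum (f := fun γ => ‖sigmaSym d γ n‖ ^ 2)
    (fun _ _ => by positivity) hα) (sum_nonneg fun _ _ => by positivity)

lemma QS_natCast_pos {S : Finset (Fin d → ℕ)} (h0 : 0 ∈ S) {n : Fin d → ℕ}
    (hn : ∀ j, n j ≠ 0) : 0 < QS d S fun j => (n j : ℤ) :=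
  sum_pos' (fun _ _ => by positivity) ⟨0, h0, by simp [norm_sigmaSym_natCast_sq hn]⟩

lemma prod_exp_mul_pow (t : ℝ) (c : Fin d → ℝ) (γ : Fin d → ℕ) :
    ∏ j, exp (t * c j) ^ (2 * γ j) = exp (2 * t * ∑ j, (γ j : ℝ) * c j) := by
  rw [mul_sum, exp_sum]
  refine prod_congr rfl fun j _ => ?_
  rw [← exp_nat_mul]
  push_cast
  ring_nf

variable {t : ℝ} {c : Fin d → ℝ} {n : Fin d → ℕ}

lemma ne_zero_of_exp_le (hlow : ∀ j, exp (t * c j) ≤ n j) (j : Fin d) : n j ≠ 0 := by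
  exact_mod_cast ((exp_pos _).trans_le (hlow j)).ne'

lemma exp_le_norm_sigmaSym_sq (hlow : ∀ j, exp (t * c j) ≤ n j) (γ : Fin d → ℕ) :
    exp (2 * t * ∑ j, (γ j : ℝ) * c j) ≤ ‖sigmaSym d γ fun j => (n j : ℤ)‖ ^ 2 := by
  rw [norm_sigmaSym_natCast_sq (ne_zero_of_exp_le hlow), ← prod_exp_mul_pow]
  exact prod_le_prod (fun _ _ => by positivity)
    fun j _ => pow_le_pow_left₀ (exp_pos _).le (hlow j) _

lemma norm_sigmaSym_sq_le (hlow : ∀ j, exp (t * c j) ≤ n j)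
    (hup : ∀ j, (n j : ℝ) ≤ 2 * exp (t * c j)) (γ : Fin d → ℕ) :
    ‖sigmaSym d γ fun j => (n j : ℤ)‖ ^ 2 ≤
      4 ^ (∑ j, γ j) * exp (2 * t * ∑ j, (γ j : ℝ) * c j) := by
  rw [norm_sigmaSym_natCast_sq (ne_zero_of_exp_le hlow), ← prod_exp_mul_pow,
    ← prod_pow_eq_pow_sum, ← prod_mul_distrib]
  refine prod_le_prod (fun _ _ => by positivity) fun j _ => ?_
  calc (n j : ℝ) ^ (2 * γ j) ≤ (2 * exp (t * c j)) ^ (2 * γ j) :=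
        pow_le_pow_left₀ (Nat.cast_nonneg _) (hup j) _
    _ = 4 ^ γ j * exp (t * c j) ^ (2 * γ j) := by rw [mul_pow, pow_mul]; norm_num

lemma QS_le {S : Finset (Fin d → ℕ)} (hγc : ∀ γ ∈ S, ∑ j, (γ j : ℝ) * c j ≤ 1) (ht : 0 ≤ t)
    (hlow : ∀ j, exp (t * c j) ≤ n j) (hup : ∀ j, (n j : ℝ) ≤ 2 * exp (t * c j)) :
    QS d S (fun j => (n j : ℤ)) ≤ (∑ γ ∈ S, (4 : ℝ) ^ (∑ j, γ j)) * exp (2 * t) := by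
  rw [QS, sum_mul]
  refine sum_le_sum fun γ hγ => (norm_sigmaSym_sq_le hlow hup γ).trans ?_
  exact mul_le_mul_of_nonneg_left
    (exp_le_exp.2 (mul_le_of_le_one_right (by positivity) (hγc γ hγ))) (by positivity)

lemma inv_le_norm_sigmaSym_sq_div_QS {S : Finset (Fin d → ℕ)} (h0 : 0 ∈ S) {α : Fin d → ℕ}
    (hαc : ∑ j, (α j : ℝ) * c j = 1) (hγc : ∀ γ ∈ S, ∑ j, (γ j : ℝ) * c j ≤ 1) (ht : 0 ≤ t)
    (hlow : ∀ j, exp (t * c j) ≤ n j) (hup : ∀ j, (n j : ℝ) ≤ 2 * exp (t * c j)) :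
    (∑ γ ∈ S, (4 : ℝ) ^ (∑ j, γ j))⁻¹ ≤
      ‖sigmaSym d α fun j => (n j : ℤ)‖ ^ 2 / QS d S fun j => (n j : ℤ) := by
  have hC : 0 < ∑ γ ∈ S, (4 : ℝ) ^ (∑ j, γ j) := sum_pos (fun _ _ => by positivity) ⟨0, h0⟩
  have hα := exp_le_norm_sigmaSym_sq hlow α
  rw [hαc, mul_one] at hα
  rw [le_div_iff₀ (QS_natCast_pos h0 (ne_zero_of_exp_le hlow))]
  calc _ ≤ (∑ γ ∈ S, (4 : ℝ) ^ (∑ j, γ j))⁻¹ * ((∑ γ ∈ S, (4 : ℝ) ^ (∑ j, γ j)) * exp (2 * t)) :=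
        mul_le_mul_of_nonneg_left (QS_le hγc ht hlow hup) (by positivity)
    _ = exp (2 * t) := inv_mul_cancel_left₀ hC.ne' _
    _ ≤ _ := hα

end SigmaSym

theorem stmt_10_general (d : ℕ) (S : Finset (Fin d → ℕ)) (h0 : (0 : Fin d → ℕ) ∈ S)
    (α : Fin d → ℕ) (hα : α ∈ S)
    (c : Fin d → ℝ) (hc : ∀ j, 0 < c j)
    (hαc : ∑ j : Fin d, (α j : ℝ) * c j = 1)
    (hγc : ∀ γ ∈ S, ∑ j : Fin d, (γ j : ℝ) * c j ≤ 1)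
    (n : ℕ → Fin d → ℕ) (hn : ∀ k j, n k j = ⌈Real.exp (k * c j)⌉₊) :
    0 < Filter.liminf (fun k : ℕ =>
        ‖sigmaSym d α fun j => (n k j : ℤ)‖ ^ 2 /
          QS d S (fun j => (n k j : ℤ))) Filter.atTop := by
  have hlow (k : ℕ) (j : Fin d) : exp (k * c j) ≤ n k j := hn k j ▸ Nat.le_ceil _
  have hup (k : ℕ) (j : Fin d) : (n k j : ℝ) ≤ 2 * exp (k * c j) :=
    hn k j ▸ Nat.ceil_exp_le_two_mul_exp (by have := hc j; positivity)
  have hC : 0 < ∑ γ ∈ S, (4 : ℝ) ^ (∑ j, γ j) := sum_pos (fun _ _ => by positivity) ⟨0, h0⟩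
  -- `liminf` of a real sequence is junk unless it is bounded above; the ratio is at most `1`.
  have hbdd := Filter.isCoboundedUnder_ge_of_le Filter.atTop (x := 1)
    fun k => norm_sigmaSym_sq_div_QS_le_one hα fun j => (n k j : ℤ)
  exact (inv_pos.2 hC).trans_le <| Filter.le_liminf_of_le hbdd <| Filter.Eventually.of_forall
    fun k => inv_le_norm_sigmaSym_sq_div_QS h0 hαc hγc k.cast_nonneg (hlow k) (hup k)

theorem stmt_10 (d : ℕ) (S : Finset (Fin d → ℕ)) (h0 : (0 : Fin d → ℕ) ∈ S)
    (hclosed : ∀ α ∈ S, ∀ β : Fin d → ℕ, (∀ j, β j ≤ α j) → β ∈ S)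
    (α β : Fin d → ℕ) (hα : α ∈ S) (hβ : β ∈ S)
    (hpar : (∑ j : Fin d, α j) % 2 ≠ (∑ j : Fin d, β j) % 2)
    (c : Fin d → ℝ) (hc : ∀ j, 0 < c j)
    (hαc : ∑ j : Fin d, (α j : ℝ) * c j = 1)
    (hβc : ∑ j : Fin d, (β j : ℝ) * c j = 1)
    (hγc : ∀ γ ∈ S, ∑ j : Fin d, (γ j : ℝ) * c j ≤ 1)
    (n : ℕ → Fin d → ℕ) (hn : ∀ k j, n k j = ⌈Real.exp (k * c j)⌉₊) :
    0 < Filter.liminf (fun k : ℕ =>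
        ‖sigmaSym d α fun j => (n k j : ℤ)‖ ^ 2 /
          QS d S (fun j => (n k j : ℤ))) Filter.atTop :=
  stmt_10_general d S h0 α hα c hc hαc hγc n hn
end

section
/- Let $S \subset \mathbb{N}^d$ be a finite set containing $0$. Given $\varepsilon \in (0,1)$ and a positive integer $D$, there exists $\rho > 1$ such that for every $m, n \in \mathbb{Z}^d$, if $\min_{1\le j\le d}|n(j)| \ge \rho$ and $\sum_{j=1}^d |n(j)-m(j)| \le D$, then $\sum_{\gamma \in S} \left| \frac{\sigma_\gamma(m)}{Q_S(m)^{1/2}} - \frac{\sigma_\gamma(n)}{Q_S(n)^{1/2}} \right|^2 < \varepsilon^2$. -/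
/-!
Once `min_j |n(j)|` is large compared with `D`, every ratio `m(j)/n(j)` is close to `1`, so
`σ_γ(m) = (∏_j (m(j)/n(j))^{γ(j)}) σ_γ(n)` with a real factor that, by continuity of monomials
at `1`, is uniformly close to `1` over the finite set `S`. Hence the vectors `(σ_γ(m))_{γ∈S}` and
`(σ_γ(n))_{γ∈S}` are relatively close in `ℓ²`, and normalising to the unit sphere at most doubles
relative distances.
-/

open Finset

open NormedSpace Filter Topology

section Normalize

variable {V : Type*} [NormedAddCommGroup V] [NormedSpace ℝ V]

lemma norm_normalize_le_one (x : V) : ‖normalize x‖ ≤ 1 := by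
  rw [NormedSpace.normalize, norm_smul, norm_inv, norm_norm]
  exact inv_mul_le_one_of_le₀ le_rfl (norm_nonneg x)

lemma norm_normalize_sub_normalize_le {u v : V} (hv : v ≠ 0) :
    ‖normalize u - normalize v‖ ≤ 2 * ‖u - v‖ / ‖v‖ := by
  have hv' : 0 < ‖v‖ := norm_pos_iff.mpr hv
  have hdecomp : ‖v‖ • (normalize u - normalize v) = (‖v‖ - ‖u‖) • normalize u + (u - v) := by
    rw [smul_sub, sub_smul, norm_smul_normalize, norm_smul_normalize]
    abel
  rw [le_div_iff₀ hv', mul_comm, ← abs_of_pos hv', ← Real.norm_eq_abs, ← norm_smul, hdecomp]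
  calc ‖(‖v‖ - ‖u‖) • normalize u + (u - v)‖
      ≤ |‖v‖ - ‖u‖| * ‖normalize u‖ + ‖u - v‖ := by
        grw [norm_add_le, norm_smul, Real.norm_eq_abs]
    _ ≤ ‖u - v‖ * 1 + ‖u - v‖ := by
        grw [norm_normalize_le_one, abs_norm_sub_norm_le, norm_sub_rev v u]
    _ = 2 * ‖u - v‖ := by ring

end Normalize

lemma EuclideanSpace.norm_sub_le_of_forall_norm_sub_le {𝕜 ι : Type*} [RCLike 𝕜] [Fintype ι]
    {u v : EuclideanSpace 𝕜 ι} {c : ℝ} (hc : 0 ≤ c) (h : ∀ i, ‖u i - v i‖ ≤ c * ‖v i‖) :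
    ‖u - v‖ ≤ c * ‖v‖ := by
  rw [EuclideanSpace.norm_eq, EuclideanSpace.norm_eq, ← abs_of_nonneg hc, ← Real.sqrt_sq_eq_abs,
    ← Real.sqrt_mul (sq_nonneg _), mul_sum]
  gcongr with i
  calc ‖(u - v) i‖ ^ 2 ≤ (c * ‖v i‖) ^ 2 := by gcongr; exact h i
    _ = c ^ 2 * ‖v i‖ ^ 2 := mul_pow _ _ _

lemma exists_pos_forall_abs_prod_pow_sub_one_lt {ι : Type*} [Fintype ι] (S : Finset (ι → ℕ))
    {η : ℝ} (hη : 0 < η) :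
    ∃ δ > 0, ∀ t : ι → ℝ, (∀ j, |t j - 1| < δ) → ∀ γ ∈ S, |∏ j, t j ^ γ j - 1| < η := by
  have hev : ∀ᶠ t in 𝓝 (1 : ι → ℝ), ∀ γ ∈ S, |∏ j, t j ^ γ j - 1| < η := by
    refine (eventually_all_finset S).2 fun γ _ => ?_
    have hcont : Continuous fun t : ι → ℝ => ∏ j, t j ^ γ j := by fun_prop
    simpa [Real.dist_eq] using Metric.tendsto_nhds.mp (hcont.tendsto 1) η hη
  obtain ⟨δ, hδ, hball⟩ := Metric.eventually_nhds_iff.mp hev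
  exact ⟨δ, hδ, fun t ht =>
    hball <| (dist_pi_lt_iff hδ).2 fun j => by simpa [Real.dist_eq] using ht j⟩

lemma abs_div_sub_one_lt {a b D δ : ℝ} (hδ : 0 < δ) (hb : (D + 1) / δ ≤ |b|)
    (hab : |a - b| ≤ D) : |a / b - 1| < δ := by
  have hD : 0 ≤ D := (abs_nonneg _).trans hab
  have hb' : 0 < |b| := (div_pos (by linarith) hδ).trans_le hb
  have hb0 : b ≠ 0 := abs_pos.mp hb'
  rw [div_sub_one hb0, abs_div, div_lt_iff₀ hb']
  rw [div_le_iff₀ hδ] at hb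
  linarith

lemma ne_zero_of_abs_div_sub_one_lt_one {a b : ℝ} (h : |a / b - 1| < 1) : a ≠ 0 ∧ b ≠ 0 := by
  constructor <;> rintro rfl <;> norm_num at h

lemma sigmaSym_zero {d : ℕ} {n : Fin d → ℤ} (hn : ∀ j, n j ≠ 0) : sigmaSym d 0 n = 1 := by
  simp [sigmaSym, hn]

lemma sigmaSym_eq_prod_div_pow_mul {d : ℕ} (γ : Fin d → ℕ) {m n : Fin d → ℤ}
    (hm : ∀ j, m j ≠ 0) (hn : ∀ j, n j ≠ 0) :
    sigmaSym d γ m = ((∏ j, ((m j : ℝ) / n j) ^ γ j : ℝ) : ℂ) * sigmaSym d γ n := by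
  rw [sigmaSym, sigmaSym, if_pos hm, if_pos hn, Complex.ofReal_prod, ← prod_mul_distrib]
  refine prod_congr rfl fun j _ => ?_
  rw [Complex.ofReal_pow, ← mul_pow]
  push_cast
  field_simp [show (n j : ℂ) ≠ 0 by exact_mod_cast hn j]

noncomputable def sigmaVec (d : ℕ) (S : Finset (Fin d → ℕ)) (n : Fin d → ℤ) :
    EuclideanSpace ℂ S :=
  WithLp.toLp 2 fun γ => sigmaSym d γ n

lemma norm_sigmaVec (d : ℕ) (S : Finset (Fin d → ℕ)) (n : Fin d → ℤ) :
    ‖sigmaVec d S n‖ = √(QS d S n) := by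
  rw [EuclideanSpace.norm_eq, QS, ← sum_coe_sort S]
  rfl

lemma norm_normalize_sigmaVec_sub_sq (d : ℕ) (S : Finset (Fin d → ℕ)) (m n : Fin d → ℤ) :
    ‖normalize (sigmaVec d S m) - normalize (sigmaVec d S n)‖ ^ 2 =
      ∑ γ ∈ S, ‖sigmaSym d γ m / (√(QS d S m) : ℂ) - sigmaSym d γ n / (√(QS d S n) : ℂ)‖ ^ 2 := by
  rw [EuclideanSpace.norm_eq, Real.sq_sqrt (by positivity), ← sum_coe_sort S]
  refine sum_congr rfl fun γ _ => ?_
  rw [← norm_sigmaVec, ← norm_sigmaVec]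
  simp only [NormedSpace.normalize, PiLp.sub_apply, PiLp.smul_apply, Complex.real_smul,
    Complex.ofReal_inv, div_eq_inv_mul]
  rfl

lemma sigmaVec_ne_zero {d : ℕ} {S : Finset (Fin d → ℕ)} (h0 : 0 ∈ S) {n : Fin d → ℤ}
    (hn : ∀ j, n j ≠ 0) : sigmaVec d S n ≠ 0 := fun hv => by
  simpa [sigmaVec, sigmaSym_zero hn] using congrArg (fun x => x ⟨0, h0⟩) hv

lemma norm_sigmaVec_sub_le {d : ℕ} {S : Finset (Fin d → ℕ)} {m n : Fin d → ℤ}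
    (hm : ∀ j, m j ≠ 0) (hn : ∀ j, n j ≠ 0) {η : ℝ} (hη : 0 ≤ η)
    (h : ∀ γ ∈ S, |∏ j, ((m j : ℝ) / n j) ^ γ j - 1| ≤ η) :
    ‖sigmaVec d S m - sigmaVec d S n‖ ≤ η * ‖sigmaVec d S n‖ := by
  refine EuclideanSpace.norm_sub_le_of_forall_norm_sub_le hη fun γ => ?_
  simp only [sigmaVec, PiLp.toLp_apply, sigmaSym_eq_prod_div_pow_mul γ hm hn]
  rw [← sub_one_mul, ← Complex.ofReal_one, ← Complex.ofReal_sub, norm_mul, Complex.norm_real,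
    Real.norm_eq_abs]
  gcongr
  exact h γ γ.2

theorem stmt_12_general (d : ℕ) (S : Finset (Fin d → ℕ)) (h0 : (0 : Fin d → ℕ) ∈ S)
    (ε : ℝ) (hε : 0 < ε) (D : ℕ) :
    ∃ ρ : ℝ, 1 < ρ ∧ ∀ m n : Fin d → ℤ,
      (∀ j : Fin d, ρ ≤ (|n j| : ℝ)) →
      (∑ j : Fin d, |n j - m j| ≤ (D : ℤ)) →
      ∑ γ ∈ S, ‖sigmaSym d γ m / (Real.sqrt (QS d S m) : ℂ) -
          sigmaSym d γ n / (Real.sqrt (QS d S n) : ℂ)‖ ^ 2 < ε ^ 2 := by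
  obtain ⟨δ, hδ, hclose⟩ := exists_pos_forall_abs_prod_pow_sub_one_lt S (by positivity : 0 < ε / 3)
  set δ' := min δ (1 / 2)
  have hδ'0 : 0 < δ' := lt_min hδ (by norm_num)
  refine ⟨(D + 1) / δ', by rw [lt_div_iff₀ hδ'0]; linarith [min_le_right δ (1 / 2),
    (D.cast_nonneg : (0 : ℝ) ≤ D)], fun m n hn hmn => ?_⟩
  have hratio : ∀ j, |(m j : ℝ) / n j - 1| < δ' := fun j => abs_div_sub_one_lt hδ'0 (hn j) <| by
    rw [abs_sub_comm]
    exact_mod_cast (single_le_sum (fun i _ => abs_nonneg (n i - m i)) (mem_univ j)).trans hmn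
  have hnonzero j := ne_zero_of_abs_div_sub_one_lt_one <|
    (hratio j).trans_le <| (min_le_right _ _).trans (by norm_num)
  have hm0 : ∀ j, m j ≠ 0 := fun j => Int.cast_ne_zero.mp (hnonzero j).1
  have hn0 : ∀ j, n j ≠ 0 := fun j => Int.cast_ne_zero.mp (hnonzero j).2
  have hv : 0 < ‖sigmaVec d S n‖ := norm_pos_iff.mpr (sigmaVec_ne_zero h0 hn0)
  have huv := norm_sigmaVec_sub_le hm0 hn0 (by positivity : 0 ≤ ε / 3) fun γ hγ =>
    (hclose _ (fun j => (hratio j).trans_le (min_le_left _ _)) γ hγ).le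
  rw [← norm_normalize_sigmaVec_sub_sq]
  calc ‖normalize (sigmaVec d S m) - normalize (sigmaVec d S n)‖ ^ 2
      ≤ (2 * ‖sigmaVec d S m - sigmaVec d S n‖ / ‖sigmaVec d S n‖) ^ 2 := by
        gcongr; exact norm_normalize_sub_normalize_le (norm_pos_iff.mp hv)
    _ ≤ (2 * (ε / 3)) ^ 2 := by
        gcongr
        rw [div_le_iff₀ hv]
        linarith
    _ < ε ^ 2 := by gcongr; linarith

theorem stmt_12 (d : ℕ) (S : Finset (Fin d → ℕ)) (h0 : (0 : Fin d → ℕ) ∈ S)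
    (ε : ℝ) (hε : 0 < ε) (hε1 : ε < 1) (D : ℕ) (hD : 0 < D) :
    ∃ ρ : ℝ, 1 < ρ ∧ ∀ m n : Fin d → ℤ,
      (∀ j : Fin d, ρ ≤ (|n j| : ℝ)) →
      (∑ j : Fin d, |n j - m j| ≤ (D : ℤ)) →
      ∑ γ ∈ S, ‖sigmaSym d γ m / (Real.sqrt (QS d S m) : ℂ) -
          sigmaSym d γ n / (Real.sqrt (QS d S n) : ℂ)‖ ^ 2 < ε ^ 2 :=
  stmt_12_general d S h0 ε hε D
end
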